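/- arXiv:2503.04498 — 9 statements merged into one kernel-verified Lean document; each statement's English description precedes it below -/
import Mathlib

section
/- Let m, n ≥ 1 be integers and a, b nonzero elements of a field F. Then gcd(x^n - a, x^m - b) in F[x] has degree 0 or degree d := gcd(m, n). Moreover, it has degree d if and only if a^(m/d) = b^(n/d). -/
open Polynomial

lemma nat_bezout (m n : ℕ) (hm : 1 ≤ m) (hn : 1 ≤ n) :
    ∃ s t : ℕ, s * n = t * m + Nat.gcd m n := by
  have h := Nat.gcd_eq_gcd_ab m n
  set u := Nat.gcdA m n with hu
  set v := Nat.gcdB m n with hv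
  set M : ℤ := u.natAbs + v.natAbs with hM
  have hM0 : (0:ℤ) ≤ M := by positivity
  have hs0 : (0:ℤ) ≤ v + m * M := by
    have h1 : (1:ℤ) ≤ m := by exact_mod_cast hm
    have h2 : (v.natAbs : ℤ) ≤ M := by simp [hM]
    have h3 : -v ≤ (v.natAbs : ℤ) := by
      rcases le_or_gt 0 v with h | h
      · simp [Int.natAbs_of_nonneg h]; linarith
      · rw [Int.ofNat_natAbs_of_nonpos h.le]
    nlinarith
  have ht0 : (0:ℤ) ≤ n * M - u := by
    have h1 : (1:ℤ) ≤ n := by exact_mod_cast hn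
    have h2 : (u.natAbs : ℤ) ≤ M := by simp [hM]
    have h3 : u ≤ (u.natAbs : ℤ) := Int.le_natAbs
    nlinarith
  refine ⟨(v + m * M).toNat, (n * M - u).toNat, ?_⟩
  have e1 : (((v + m * M).toNat : ℤ)) = v + m * M := Int.toNat_of_nonneg hs0
  have e2 : (((n * M - u).toNat : ℤ)) = n * M - u := Int.toNat_of_nonneg ht0
  have : (((v + m * M).toNat : ℤ)) * n = (((n * M - u).toNat : ℤ)) * m + Nat.gcd m n := by
    rw [e1, e2]; linear_combination -h
  exact_mod_cast this

theorem stmt1 {F : Type*} [Field F] [DecidableEq F] (m n : ℕ) (hm : 1 ≤ m) (hn : 1 ≤ n)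
    (a b : F) (ha : a ≠ 0) (hb : b ≠ 0) (d : ℕ) (hd : d = Nat.gcd m n) :
    ((gcd (X ^ n - C a) (X ^ m - C b)).natDegree = 0 ∨
      (gcd (X ^ n - C a) (X ^ m - C b)).natDegree = d) ∧
    ((gcd (X ^ n - C a) (X ^ m - C b)).natDegree = d ↔ a ^ (m / d) = b ^ (n / d)) := by
  set g : F[X] := gcd (X ^ n - C a) (X ^ m - C b) with hg
  have hd0 : 0 < d := by
    rw [hd]; exact Nat.gcd_pos_of_pos_left _ hm
  have hdm : d ∣ m := hd ▸ Nat.gcd_dvd_left m n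
  have hdn : d ∣ n := hd ▸ Nat.gcd_dvd_right m n
  set k : ℕ := n / d with hk
  set l : ℕ := m / d with hl
  have hnk : n = d * k := (Nat.mul_div_cancel' hdn).symm
  have hml : m = d * l := (Nat.mul_div_cancel' hdm).symm
  obtain ⟨s, t, hst⟩ := nat_bezout m n hm hn
  rw [← hd] at hst
  -- s * k = t * l + 1
  have hskl : s * k = t * l + 1 := by
    have : d * (s * k) = d * (t * l + 1) := by
      rw [hnk, hml] at hst; ring_nf; ring_nf at hst; linarith [hst]
    exact Nat.eq_of_mul_eq_mul_left hd0 this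
  have hbt : b ^ t ≠ 0 := pow_ne_zero _ hb
  set c : F := a ^ s * (b ^ t)⁻¹ with hc
  -- g divides X^d - C c
  have hga : g ∣ X ^ n - C a := gcd_dvd_left _ _
  have hgb : g ∣ X ^ m - C b := gcd_dvd_right _ _
  have hg1 : g ∣ X ^ (s * n) - C (a ^ s) := by
    refine hga.trans ?_
    have : (X:F[X]) ^ (s*n) = (X ^ n) ^ s := by rw [← pow_mul, Nat.mul_comm]
    rw [this, map_pow]
    exact sub_dvd_pow_sub_pow _ _ s
  have hg2 : g ∣ X ^ (t * m) - C (b ^ t) := by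
    refine hgb.trans ?_
    have : (X:F[X]) ^ (t*m) = (X ^ m) ^ t := by rw [← pow_mul, Nat.mul_comm]
    rw [this, map_pow]
    exact sub_dvd_pow_sub_pow _ _ t
  have hgc : g ∣ X ^ d - C c := by
    have key : g ∣ C (b ^ t) * X ^ d - C (a ^ s) := by
      have hid : C (b ^ t) * X ^ d - C (a ^ s)
          = (X ^ (s*n) - C (a ^ s)) - X ^ d * (X ^ (t*m) - C (b ^ t)) := by
        rw [show s * n = t * m + d from hst]
        ring
      rw [hid]
      exact dvd_sub hg1 (Dvd.dvd.mul_left hg2 _)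
    have : X ^ d - C c = C ((b ^ t)⁻¹) * (C (b ^ t) * X ^ d - C (a ^ s)) := by
      rw [hc]
      rw [mul_sub, ← mul_assoc, ← map_mul, inv_mul_cancel₀ hbt, ← map_mul, map_one, one_mul,
        mul_comm (a ^ s)]
    rw [this]
    exact Dvd.dvd.mul_left key _
  have hXdc : (X ^ d - C c : F[X]) ≠ 0 := X_pow_sub_C_ne_zero hd0 c
  have hXa : (X ^ n - C a : F[X]) ≠ 0 := X_pow_sub_C_ne_zero (by omega) a
  have hXb : (X ^ m - C b : F[X]) ≠ 0 := X_pow_sub_C_ne_zero (by omega) b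
  have hg0 : g ≠ 0 := by
    rw [hg, Ne, gcd_eq_zero_iff]
    tauto
  -- divisibilities to powers
  have hdck : (X ^ d - C c : F[X]) ∣ X ^ n - C (c ^ k) := by
    have : (X:F[X]) ^ n = (X ^ d) ^ k := by rw [← pow_mul, ← hnk]
    rw [this, map_pow]
    exact sub_dvd_pow_sub_pow _ _ k
  have hdcl : (X ^ d - C c : F[X]) ∣ X ^ m - C (c ^ l) := by
    have : (X:F[X]) ^ m = (X ^ d) ^ l := by rw [← pow_mul, ← hml]
    rw [this, map_pow]
    exact sub_dvd_pow_sub_pow _ _ l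
  -- case results
  have deg_d : c ^ k = a → c ^ l = b → g.natDegree = d := by
    intro h1 h2
    have hdvd : (X ^ d - C c : F[X]) ∣ g := by
      apply dvd_gcd
      · rw [← h1]; exact hdck
      · rw [← h2]; exact hdcl
    have e1 : g.natDegree ≤ d := by
      have := natDegree_le_of_dvd hgc hXdc
      rwa [natDegree_X_pow_sub_C] at this
    have e2 : d ≤ g.natDegree := by
      have := natDegree_le_of_dvd hdvd hg0
      rwa [natDegree_X_pow_sub_C] at this
    omega
  have deg_0a : c ^ k ≠ a → g.natDegree = 0 := by
    intro h1
    have : g ∣ C (a - c ^ k) := by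
      have : C (a - c ^ k) = (X ^ n - C (c ^ k)) - (X ^ n - C a) := by
        rw [map_sub]; ring
      rw [this]
      exact dvd_sub (hgc.trans hdck) hga
    have hne : (C (a - c ^ k) : F[X]) ≠ 0 := by
      rw [Ne, Polynomial.C_eq_zero, sub_eq_zero]
      exact fun h => h1 h.symm
    have := natDegree_le_of_dvd this hne
    rw [natDegree_C] at this
    omega
  have deg_0b : c ^ l ≠ b → g.natDegree = 0 := by
    intro h1
    have : g ∣ C (b - c ^ l) := by
      have : C (b - c ^ l) = (X ^ m - C (c ^ l)) - (X ^ m - C b) := by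
        rw [map_sub]; ring
      rw [this]
      exact dvd_sub (hgc.trans hdcl) hgb
    have hne : (C (b - c ^ l) : F[X]) ≠ 0 := by
      rw [Ne, Polynomial.C_eq_zero, sub_eq_zero]
      exact fun h => h1 h.symm
    have := natDegree_le_of_dvd this hne
    rw [natDegree_C] at this
    omega
  -- the field computation: a^l = b^k ↔ (c^k = a ∧ c^l = b)
  have hiff : a ^ l = b ^ k ↔ (c ^ k = a ∧ c ^ l = b) := by
    constructor
    · intro hab
      have hcb : c * b ^ t = a ^ s := by
        rw [hc]; field_simp
      have hck : c ^ k = a := by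
        have e1 : c ^ k * (b ^ t) ^ k = a ^ (s * k) := by
          calc c ^ k * (b ^ t) ^ k = (c * b ^ t) ^ k := (mul_pow _ _ _).symm
            _ = (a ^ s) ^ k := by rw [hcb]
            _ = a ^ (s * k) := (pow_mul a s k).symm
        have e2 : a ^ (s * k) = a * (b ^ t) ^ k := by
          calc a ^ (s * k) = a ^ (t * l) * a := by rw [hskl, pow_succ]
            _ = (a ^ l) ^ t * a := by rw [← pow_mul, Nat.mul_comm]
            _ = (b ^ k) ^ t * a := by rw [hab]
            _ = (b ^ t) ^ k * a := by rw [← pow_mul, Nat.mul_comm k t, pow_mul]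
            _ = a * (b ^ t) ^ k := mul_comm _ _
        exact mul_right_cancel₀ (pow_ne_zero _ hbt) (e1.trans e2)
      have hcl : c ^ l = b := by
        have e1 : c ^ l * (b ^ t) ^ l = a ^ (s * l) := by
          calc c ^ l * (b ^ t) ^ l = (c * b ^ t) ^ l := (mul_pow _ _ _).symm
            _ = (a ^ s) ^ l := by rw [hcb]
            _ = a ^ (s * l) := (pow_mul a s l).symm
        have e2 : a ^ (s * l) = b * (b ^ t) ^ l := by
          calc a ^ (s * l) = (a ^ l) ^ s := by rw [Nat.mul_comm, pow_mul]
            _ = (b ^ k) ^ s := by rw [hab]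
            _ = b ^ (t * l + 1) := by rw [← pow_mul, Nat.mul_comm k s, hskl]
            _ = (b ^ t) ^ l * b := by rw [pow_succ, pow_mul]
            _ = b * (b ^ t) ^ l := mul_comm _ _
        exact mul_right_cancel₀ (pow_ne_zero _ hbt) (e1.trans e2)
      exact ⟨hck, hcl⟩
    · rintro ⟨h1, h2⟩
      rw [← h1, ← h2, ← pow_mul, ← pow_mul, Nat.mul_comm]
  constructor
  · by_cases h1 : c ^ k = a
    · by_cases h2 : c ^ l = b
      · exact Or.inr (deg_d h1 h2)
      · exact Or.inl (deg_0b h2)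
    · exact Or.inl (deg_0a h1)
  · rw [hiff]
    constructor
    · intro hdeg
      by_cases h1 : c ^ k = a
      · by_cases h2 : c ^ l = b
        · exact ⟨h1, h2⟩
        · exfalso; have := deg_0b h2; omega
      · exfalso; have := deg_0a h1; omega
    · rintro ⟨h1, h2⟩
      exact deg_d h1 h2
end

section
/- Let F_q have characteristic p, and let f = x^n - a and g = x^m - b be polynomials in F_q[x] with a, b nonzero. Then either gcd(f, g) = 1 or gcd(f, g) = x^{gcd(m,n)} - a^u b^v for some integers u, v with gcd(m, n) = u·n + v·m. -/
open Polynomial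

private lemma aux_dvd {F : Type*} [Field F] (r : F) (j N : ℕ) :
    (X ^ N - C r : F[X]) ∣ X ^ (j * N) - C (r ^ j) := by
  have h := sub_dvd_pow_sub_pow (X ^ N : F[X]) (C r) j
  simpa [← pow_mul, mul_comm, map_pow] using h

theorem stmt2 {F : Type*} [Field F] [Fintype F] [DecidableEq F] (p : ℕ) [CharP F p]
    (n m : ℕ) (hn : 0 < n) (hm : 0 < m) (a b : F) (ha : a ≠ 0) (hb : b ≠ 0) :
    gcd (X ^ n - C a) (X ^ m - C b) = 1 ∨
    ∃ u v : ℤ, (Nat.gcd m n : ℤ) = u * n + v * m ∧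
      gcd (X ^ n - C a) (X ^ m - C b) = X ^ Nat.gcd m n - C (a ^ u * b ^ v) := by
  set f : F[X] := X ^ n - C a with hf
  set g : F[X] := X ^ m - C b with hg
  set d := Nat.gcd m n with hdd
  have hd : 0 < d := Nat.gcd_pos_of_pos_left n hm
  obtain ⟨nd, hnd⟩ : d ∣ n := Nat.gcd_dvd_right m n
  obtain ⟨md, hmd⟩ : d ∣ m := Nat.gcd_dvd_left m n
  have hnd1 : 1 ≤ nd := by nlinarith [hn, hd]
  have hmd1 : 1 ≤ md := by nlinarith [hm, hd]
  -- Bezout coefficients with controlled signs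
  have hbez : (d : ℤ) = m * Nat.gcdA m n + n * Nat.gcdB m n := Nat.gcd_eq_gcd_ab m n
  set u : ℤ := Nat.gcdB m n + (|Nat.gcdB m n| + 1) * md with hu_def
  set v : ℤ := Nat.gcdA m n - (|Nat.gcdB m n| + 1) * nd with hv_def
  have hmn : (md : ℤ) * n = nd * m := by
    have h1 : (n : ℤ) = d * nd := by exact_mod_cast hnd
    have h2 : (m : ℤ) = d * md := by exact_mod_cast hmd
    rw [h1, h2]; ring
  have huv : (d : ℤ) = u * n + v * m := by
    rw [hu_def, hv_def]
    linear_combination hbez - (|Nat.gcdB m n| + 1) * hmn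
  have hu1 : 1 ≤ u := by
    have h1 : (1 : ℤ) ≤ md := by exact_mod_cast hmd1
    have h2 : -Nat.gcdB m n ≤ |Nat.gcdB m n| := neg_le_abs _
    have h3 : (0:ℤ) ≤ |Nat.gcdB m n| := abs_nonneg _
    rw [hu_def]; nlinarith
  have hv0 : v ≤ 0 := by
    have h1 : (d : ℤ) ≤ n := by
      have : d ≤ n := Nat.le_of_dvd hn ⟨nd, hnd⟩
      exact_mod_cast this
    have h2 : (0 : ℤ) < m := by exact_mod_cast hm
    have h3 : (0 : ℤ) < n := by exact_mod_cast hn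
    nlinarith [huv]
  set t : ℕ := u.toNat with ht_def
  set s : ℕ := (-v).toNat with hs_def
  have hut : (t : ℤ) = u := Int.toNat_of_nonneg (by linarith)
  have hvs : (s : ℤ) = -v := Int.toNat_of_nonneg (by linarith)
  have hds : d + s * m = t * n := by
    have : ((d + s * m : ℕ) : ℤ) = ((t * n : ℕ) : ℤ) := by
      push_cast [hut, hvs]; linarith [huv]
    exact_mod_cast this
  set c : F := a ^ t * (b ^ s)⁻¹ with hc_def
  have hc : c = a ^ u * b ^ v := by
    have hv' : v = -(s : ℤ) := by linarith [hvs]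
    rw [hv', ← hut, hc_def, zpow_natCast, zpow_neg, zpow_natCast]
  set h : F[X] := gcd f g with hh
  have hfm : f.Monic := monic_X_pow_sub_C a hn.ne'
  have hh0 : h ≠ 0 := fun H => hfm.ne_zero ((gcd_eq_zero_iff _ _).mp H).1
  have hhm : h.Monic := by
    have := Polynomial.monic_normalize (p := h) hh0
    rwa [hh, normalize_gcd] at this
  have hdvd1 : h ∣ X ^ (t * n) - C (a ^ t) := (gcd_dvd_left f g).trans (aux_dvd a t n)
  have hdvd2 : h ∣ X ^ (s * m) - C (b ^ s) := (gcd_dvd_right f g).trans (aux_dvd b s m)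
  have key : h ∣ C (b ^ s) * X ^ d - C (a ^ t) := by
    have e : (C (b ^ s) * X ^ d - C (a ^ t) : F[X]) =
        (X ^ (t * n) - C (a ^ t)) - X ^ d * (X ^ (s * m) - C (b ^ s)) := by
      rw [← hds, pow_add]; ring
    rw [e]; exact dvd_sub hdvd1 (hdvd2.mul_left _)
  have hbsu : (b : F) ^ s ≠ 0 := pow_ne_zero s hb
  have keyc : h ∣ X ^ d - C c := by
    have e : (X ^ d - C c : F[X]) = C (b ^ s)⁻¹ * (C (b ^ s) * X ^ d - C (a ^ t)) := by
      rw [mul_sub, ← mul_assoc, ← C_mul, inv_mul_cancel₀ hbsu, ← C_mul, hc_def]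
      simp [mul_comm]
    rw [e]; exact key.mul_left _
  by_cases hca : c ^ nd = a ∧ c ^ md = b
  · obtain ⟨h1, h2⟩ := hca
    have dvf : (X ^ d - C c : F[X]) ∣ f := by
      have e : f = X ^ (nd * d) - C (c ^ nd) := by rw [hf, h1, hnd, Nat.mul_comm]
      rw [e]; exact aux_dvd c nd d
    have dvg : (X ^ d - C c : F[X]) ∣ g := by
      have e : g = X ^ (md * d) - C (c ^ md) := by rw [hg, h2, hmd, Nat.mul_comm]
      rw [e]; exact aux_dvd c md d
    have dvh : (X ^ d - C c : F[X]) ∣ h := dvd_gcd dvf dvg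
    have hmon2 : (X ^ d - C c : F[X]).Monic := monic_X_pow_sub_C c hd.ne'
    right
    exact ⟨u, v, huv, by
      rw [Polynomial.eq_of_monic_of_associated hhm hmon2 (associated_of_dvd_dvd keyc dvh), hc]⟩
  · left
    rw [Decidable.not_and_iff_or_not] at hca
    have hunit : IsUnit h := by
      rcases hca with hne | hne
      · have hd1 : h ∣ X ^ (nd * d) - C (c ^ nd) := keyc.trans (aux_dvd c nd d)
        have hd2 : h ∣ X ^ n - C a := gcd_dvd_left f g
        have e : (C (c ^ nd - a) : F[X]) = (X ^ n - C a) - (X ^ (nd * d) - C (c ^ nd)) := by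
          rw [hnd, Nat.mul_comm, C_sub]; ring
        have : h ∣ C (c ^ nd - a) := by rw [e]; exact dvd_sub hd2 hd1
        exact isUnit_of_dvd_unit this (isUnit_C.mpr (isUnit_iff_ne_zero.mpr (sub_ne_zero.mpr hne)))
      · have hd1 : h ∣ X ^ (md * d) - C (c ^ md) := keyc.trans (aux_dvd c md d)
        have hd2 : h ∣ X ^ m - C b := gcd_dvd_right f g
        have e : (C (c ^ md - b) : F[X]) = (X ^ m - C b) - (X ^ (md * d) - C (c ^ md)) := by
          rw [hmd, Nat.mul_comm, C_sub]; ring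
        have : h ∣ C (c ^ md - b) := by rw [e]; exact dvd_sub hd2 hd1
        exact isUnit_of_dvd_unit this (isUnit_C.mpr (isUnit_iff_ne_zero.mpr (sub_ne_zero.mpr hne)))
    rw [hh, ← normalize_gcd, normalize_eq_one]
    exact hunit
end

section
/- Let f_i = x^{n_i} - a_i for i = 1, …, m be polynomials in F_q[x] with each a_i nonzero. Then gcd(f_1, …, f_m) is either 1 or of the form x^d - ∏_{i=1}^m a_i^{u_i}, where d = gcd(n_1, …, n_m) and u_1, …, u_m are integers with d = ∑ u_i n_i. -/
/-!
Suppose `g = gcd (X ^ nᵢ - aᵢ) ≠ 1`. In `K[X] ⧸ (g)` the root `x` of `g` satisfies `x ^ nᵢ = aᵢ`,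
so `x` is a unit and Bézout `d = ∑ uᵢ nᵢ` gives `x ^ d = ∏ aᵢ ^ uᵢ =: c`, i.e. `g ∣ X ^ d - c`.
Then `X ^ nᵢ` is congruent modulo `g` to both `c ^ (nᵢ / d)` and `aᵢ`; since `g` is not a unit these
constants agree, so `X ^ d - c` divides every `X ^ nᵢ - aᵢ`, hence `g`, and both are monic.
-/

open Polynomial

theorem Finset.natCast_gcd {ι : Type*} (s : Finset ι) (n : ι → ℕ) :
    ((s.gcd n : ℕ) : ℤ) = s.gcd fun i ↦ (n i : ℤ) := by
  classical
  induction s using Finset.induction with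
  | empty => simp
  | insert i s _ ih =>
    rw [gcd_insert, gcd_insert, ← ih, ← Int.coe_gcd, Int.gcd_natCast_natCast]
    rfl

theorem Finset.exists_natCast_gcd_eq_sum_mul {ι : Type*} (s : Finset ι) (n : ι → ℕ) :
    ∃ u : ι → ℤ, ((s.gcd n : ℕ) : ℤ) = ∑ i ∈ s, u i * n i := by
  obtain ⟨u, hu⟩ := s.gcd_eq_sum_mul fun i ↦ (n i : ℤ)
  exact ⟨u, by simp_rw [s.natCast_gcd, hu, mul_comm]⟩

theorem zpow_sum_mul_eq_prod_zpow {ι G : Type*} [CommGroup G] {g : G} {n : ι → ℕ} {b : ι → G}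
    (h : ∀ i, g ^ n i = b i) (s : Finset ι) (u : ι → ℤ) :
    g ^ (∑ i ∈ s, u i * n i) = ∏ i ∈ s, b i ^ u i := by
  classical
  induction s using Finset.induction with
  | empty => simp
  | insert i s hi ih =>
    rw [Finset.sum_insert hi, Finset.prod_insert hi, zpow_add, ih, mul_comm (u i), zpow_mul,
      zpow_natCast, h]

theorem Polynomial.dvd_X_pow_sub_C_prod_zpow {ι K : Type*} [Fintype ι] [Field K] {p : K[X]}
    {n : ι → ℕ} {a : ι → Kˣ} (hp : ∀ i, p ∣ X ^ n i - C (a i : K)) {i₀ : ι} (hi₀ : n i₀ ≠ 0)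
    {d : ℕ} {u : ι → ℤ} (hd : (d : ℤ) = ∑ i, u i * n i) :
    p ∣ X ^ d - C ((∏ i, a i ^ u i : Kˣ) : K) := by
  have hroot (i : ι) : AdjoinRoot.root p ^ n i = AdjoinRoot.of p (a i : K) := by
    simpa [sub_eq_zero] using AdjoinRoot.mk_eq_zero.2 (hp i)
  have hunit : IsUnit (AdjoinRoot.root p) :=
    (isUnit_pow_iff hi₀).1 (hroot i₀ ▸ (a i₀).isUnit.map (AdjoinRoot.of p))
  have key : hunit.unit ^ (d : ℤ) =
      Units.map (AdjoinRoot.of p : K →* AdjoinRoot p) (∏ i, a i ^ u i) := by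
    simp_rw [hd, map_prod, map_zpow]
    exact zpow_sum_mul_eq_prod_zpow (fun i ↦ Units.ext (by simp [hroot])) _ _
  rw [← AdjoinRoot.mk_eq_zero, map_sub, map_pow, AdjoinRoot.mk_X, AdjoinRoot.mk_C, sub_eq_zero]
  exact congrArg Units.val key

theorem Polynomial.eq_of_dvd_X_pow_sub_C {K : Type*} [Field K] {p : K[X]} (hp : ¬IsUnit p)
    {k : ℕ} {b b' : K} (h : p ∣ X ^ k - C b) (h' : p ∣ X ^ k - C b') : b = b' := by
  by_contra hne
  have hconst : p ∣ C (b' - b) := by simpa [C_sub] using dvd_sub h h'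
  exact hp (isUnit_of_dvd_unit hconst (isUnit_C.2 (sub_ne_zero.2 (Ne.symm hne)).isUnit))

theorem Polynomial.finset_gcd_X_pow_sub_C_eq {ι K : Type*} [Fintype ι] [Field K] [DecidableEq K]
    {n : ι → ℕ} {a : ι → Kˣ} (hg : Finset.univ.gcd (fun i ↦ X ^ n i - C (a i : K)) ≠ 1)
    {i₀ : ι} (hi₀ : n i₀ ≠ 0) {u : ι → ℤ} (hu : ((Finset.univ.gcd n : ℕ) : ℤ) = ∑ i, u i * n i) :
    Finset.univ.gcd (fun i ↦ X ^ n i - C (a i : K)) =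
      X ^ Finset.univ.gcd n - C ((∏ i, a i ^ u i : Kˣ) : K) := by
  set g := Finset.univ.gcd fun i ↦ X ^ n i - C (a i : K)
  have hdvd (i : ι) : g ∣ X ^ n i - C (a i : K) := Finset.gcd_dvd (Finset.mem_univ i)
  have hg₀ : g ≠ 0 := fun h ↦ (monic_X_pow_sub_C _ hi₀).ne_zero (zero_dvd_iff.1 (h ▸ hdvd i₀))
  have hmonic : g.Monic := by simpa only [g, Finset.normalize_gcd] using monic_normalize hg₀
  have hd₀ : Finset.univ.gcd n ≠ 0 :=
    fun h ↦ hi₀ (Finset.gcd_eq_zero_iff.1 h i₀ (Finset.mem_univ _))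
  have hgc := dvd_X_pow_sub_C_prod_zpow hdvd hi₀ hu
  refine eq_of_monic_of_associated hmonic (monic_X_pow_sub_C _ hd₀)
    (associated_of_dvd_dvd hgc (Finset.dvd_gcd fun i _ ↦ ?_))
  obtain ⟨k, hk⟩ := Finset.gcd_dvd (Finset.mem_univ i) (f := n)
  have hpow : X ^ Finset.univ.gcd n - C ((∏ i, a i ^ u i : Kˣ) : K) ∣
      X ^ n i - C (((∏ i, a i ^ u i : Kˣ) : K) ^ k) := by
    rw [hk, pow_mul, C_pow]
    exact sub_dvd_pow_sub_pow _ _ _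
  rwa [eq_of_dvd_X_pow_sub_C (mt hmonic.isUnit_iff.1 hg) (hgc.trans hpow) (hdvd i)] at hpow

theorem stmt3_general {F : Type*} [Field F] [DecidableEq F] (m : ℕ) (hm : 0 < m)
    (n : Fin m → ℕ) (hn : ∀ i, 0 < n i) (a : Fin m → F) (ha : ∀ i, a i ≠ 0) :
    Finset.gcd Finset.univ (fun i => X ^ (n i) - C (a i)) = 1 ∨
    ∃ u : Fin m → ℤ,
      ((Finset.gcd Finset.univ n : ℕ) : ℤ) = ∑ i, u i * (n i) ∧
      Finset.gcd Finset.univ (fun i => X ^ (n i) - C (a i)) =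
        X ^ (Finset.gcd Finset.univ n) - C (∏ i, a i ^ (u i)) := by
  refine or_iff_not_imp_left.2 fun hg ↦ ?_
  obtain ⟨u, hu⟩ := Finset.univ.exists_natCast_gcd_eq_sum_mul n
  refine ⟨u, hu, ?_⟩
  simpa using finset_gcd_X_pow_sub_C_eq (a := fun i ↦ Units.mk0 (a i) (ha i)) hg
    (hn ⟨0, hm⟩).ne' hu

theorem stmt3 {F : Type*} [Field F] [Fintype F] [DecidableEq F] (m : ℕ) (hm : 0 < m)
    (n : Fin m → ℕ) (hn : ∀ i, 0 < n i) (a : Fin m → F) (ha : ∀ i, a i ≠ 0) :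
    Finset.gcd Finset.univ (fun i => X ^ (n i) - C (a i)) = 1 ∨
    ∃ u : Fin m → ℤ,
      ((Finset.gcd Finset.univ n : ℕ) : ℤ) = ∑ i, u i * (n i) ∧
      Finset.gcd Finset.univ (fun i => X ^ (n i) - C (a i)) =
        X ^ (Finset.gcd Finset.univ n) - C (∏ i, a i ^ (u i)) :=
  stmt3_general m hm n hn a ha
end

section
/- Let F_q have q = p^s elements with p prime. The polynomial x^p - x - 1 is irreducible over F_q if and only if p does not divide s. -/
/-!
Let `α` be a root of `f = X ^ p - X - 1` in an algebraic closure and `d` the degree of its minimal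
polynomial over `F`, so that `f` is irreducible iff `d = p`. Since `α ^ p = α + 1`, the Frobenius
`x ↦ x ^ q`, `q = p ^ s = #F`, moves `α` to `α + s`, hence `α ^ (q ^ k) = α + s k`. On the other hand
`α ^ (q ^ k) = α` iff `d ∣ k`, as the Frobenius generates `Gal(F⟮α⟯/F)`, of order `d`. So `d ∣ k`
iff `p ∣ s k`, which forces `d = p` when `p ∤ s` and `d = 1` when `p ∣ s`.
-/

open Polynomial IntermediateField

theorem Polynomial.monic_X_pow_sub_X_sub_one {R : Type*} [Ring R] {n : ℕ} (hn : 1 < n) :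
    (X ^ n - X - 1 : R[X]).Monic := by
  nontriviality R
  rw [sub_sub, ← C_1]
  exact monic_X_pow_sub (by rw [degree_X_add_C]; exact_mod_cast hn)

theorem Polynomial.natDegree_X_pow_sub_X_sub_one {R : Type*} [Ring R] [Nontrivial R] {n : ℕ}
    (hn : 1 < n) : (X ^ n - X - 1 : R[X]).natDegree = n := by
  rw [sub_sub, ← C_1, natDegree_sub_eq_left_of_natDegree_lt, natDegree_X_pow]
  rwa [natDegree_X_pow, natDegree_X_add_C]

theorem Polynomial.Monic.irreducible_iff_natDegree_minpoly_eq {K L : Type*} [Field K] [Field L]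
    [Algebra K L] {f : K[X]} {x : L} (hf : f.Monic) (hx : aeval x f = 0) :
    Irreducible f ↔ (minpoly K x).natDegree = f.natDegree := by
  have hint : IsIntegral K x := ⟨f, hf, hx⟩
  refine ⟨fun h ↦ by rw [minpoly.eq_of_irreducible_of_monic h hx hf], fun h ↦ ?_⟩
  rw [eq_of_monic_of_dvd_of_natDegree_le (minpoly.monic hint) hf (minpoly.dvd K x hx) h.ge]
  exact minpoly.irreducible hint

theorem FiniteField.pow_card_pow_eq_self_iff_natDegree_minpoly_dvd {K L : Type*} [Field K]
    [Fintype K] [Field L] [Algebra K L] {x : L} (hx : IsIntegral K x) (k : ℕ) :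
    x ^ Fintype.card K ^ k = x ↔ (minpoly K x).natDegree ∣ k := by
  have : FiniteDimensional K K⟮x⟯ := adjoin.finiteDimensional hx
  have : Finite K⟮x⟯ := Module.finite_of_finite K
  have frobenius_pow_gen : ((frobeniusAlgHom K K⟮x⟯ ^ k) (AdjoinSimple.gen K x) : L) =
      x ^ Fintype.card K ^ k := by
    rw [AlgHom.coe_pow, coe_frobeniusAlgHom, pow_iterate]; rfl
  rw [← adjoin.finrank hx, ← orderOf_frobeniusAlgHom, orderOf_dvd_iff_pow_eq_one,
    ← frobenius_pow_gen]
  constructor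
  · intro h
    refine adjoin_algHom_ext K fun y hy ↦ ?_
    rw [Set.mem_singleton_iff] at hy
    subst hy
    exact Subtype.ext h
  · intro h
    rw [h]; rfl

theorem pow_pow_eq_add_natCast_of_pow_eq_add_one {R : Type*} [CommRing R] (p : ℕ) [Fact p.Prime]
    [CharP R p] {x : R} (hx : x ^ p = x + 1) (k : ℕ) : x ^ p ^ k = x + k := by
  induction k with
  | zero => simp
  | succ k ih =>
    have frobenius_natCast : (k : R) ^ p = k := map_natCast (frobenius R p) k
    rw [pow_succ, pow_mul, ih, add_pow_char, hx, frobenius_natCast]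
    push_cast
    ring

theorem natDegree_minpoly_dvd_iff_of_pow_eq_add_one {K L : Type*} [Field K] [Fintype K]
    [Field L] [Algebra K L] (p s : ℕ) [Fact p.Prime] [CharP L p]
    (hcard : Fintype.card K = p ^ s) {α : L} (hα : α ^ p = α + 1) (k : ℕ) :
    (minpoly K α).natDegree ∣ k ↔ p ∣ s * k := by
  have hint : IsIntegral K α :=
    ⟨_, monic_X_pow_sub_X_sub_one (Fact.out : p.Prime).one_lt, by simp [hα]⟩
  rw [← FiniteField.pow_card_pow_eq_self_iff_natDegree_minpoly_dvd hint, hcard, ← pow_mul,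
    pow_pow_eq_add_natCast_of_pow_eq_add_one p hα, add_eq_left, CharP.cast_eq_zero_iff L p]

theorem Nat.eq_prime_iff_not_dvd_of_forall_dvd_iff {p s d : ℕ} (hp : p.Prime)
    (h : ∀ k, d ∣ k ↔ p ∣ s * k) : d = p ↔ ¬ p ∣ s := by
  have hd_one : d = 1 ↔ p ∣ s := by rw [← Nat.dvd_one, h, mul_one]
  rcases (Nat.dvd_prime hp).mp ((h p).mpr (dvd_mul_left p s)) with rfl | rfl
  · simpa [hp.ne_one.symm] using hd_one
  · simpa [hp.ne_one] using hd_one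

theorem stmt12 {F : Type*} [Field F] [Fintype F] (p s : ℕ) [Fact p.Prime]
    (hcard : Fintype.card F = p ^ s) :
    Irreducible (X ^ p - X - 1 : Polynomial F) ↔ ¬ p ∣ s := by
  have hp : p.Prime := Fact.out
  have : CharP F p := charP_of_card_eq_prime_pow hcard
  have : CharP (AlgebraicClosure F) p :=
    charP_of_injective_algebraMap (algebraMap F _).injective p
  have hdeg := natDegree_X_pow_sub_X_sub_one (R := F) hp.one_lt
  obtain ⟨α, hα⟩ := IsAlgClosed.exists_aeval_eq_zero (AlgebraicClosure F)
    (X ^ p - X - 1 : F[X]) (natDegree_pos_iff_degree_pos.mp (hdeg ▸ hp.pos)).ne'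
  have hroot : α ^ p = α + 1 := by simpa [sub_eq_zero, sub_sub] using hα
  rw [(monic_X_pow_sub_X_sub_one hp.one_lt).irreducible_iff_natDegree_minpoly_eq hα, hdeg]
  exact Nat.eq_prime_iff_not_dvd_of_forall_dvd_iff hp
    (natDegree_minpoly_dvd_iff_of_pow_eq_add_one p s hcard hroot)
end

section
/- Let F_q have q = p^s elements with p prime and let b be a nonzero element of F_q. The polynomial b^p·x^p - b·x - 1 is irreducible over F_q if and only if p does not divide s. -/
/-!
Substituting `x ↦ b x` reduces the claim to the Artin–Schreier polynomial `X ^ p - X - 1`.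
Over any field of characteristic `p`, `X ^ p - X - a` is irreducible once it has no root: its roots
in an algebraic closure are `α + i` with `i` in the prime field, so a monic factor of degree
`0 < d < p` has root sum `d α + i`, which puts `α` in the base field. Over `𝔽_q` with `q = p ^ s`,
a root `α` satisfies `α ^ p ^ s = α + s`, so `α` lies in `𝔽_q` exactly when `p ∣ s`.
-/

open Polynomial

theorem FiniteField.mem_range_algebraMap_of_pow_card_eq_self {F K : Type*} [Field F] [Fintype F]
    [Field K] [Algebra F K] {t : K} (ht : t ^ Fintype.card F = t) :
    t ∈ (algebraMap F K).range := by
  have hq := Fintype.one_lt_card (α := F)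
  have hsplits : (X ^ Fintype.card F - X : F[X]).Splits := by
    rw [splits_iff_card_roots, FiniteField.roots_X_pow_card_sub_X,
      FiniteField.X_pow_card_sub_X_natDegree_eq F hq, Finset.card_val, Finset.card_univ]
  have hroot : t ∈ ((X ^ Fintype.card F - X : F[X]).map (algebraMap F K)).roots := by
    rw [mem_roots ((Polynomial.map_ne_zero_iff (algebraMap F K).injective).mpr
      (FiniteField.X_pow_card_sub_X_ne_zero F hq))]
    simp [ht]
  rw [hsplits.roots_map, FiniteField.roots_X_pow_card_sub_X] at hroot
  obtain ⟨a, -, ha⟩ := Multiset.mem_map.mp hroot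
  exact ⟨a, ha⟩

theorem pow_char_pow_eq_add_natCast {R : Type*} [CommRing R] {p : ℕ} [Fact p.Prime] [CharP R p]
    {x : R} (hx : x ^ p = x + 1) (k : ℕ) : x ^ p ^ k = x + k := by
  induction k with
  | zero => simp
  | succ k ih =>
    rw [pow_succ, pow_mul, ih, add_pow_char, hx, ← frobenius_def, map_natCast]
    push_cast
    ring

theorem natDegree_X_pow_sub_X_sub_C {R : Type*} [CommRing R] [Nontrivial R] {n : ℕ} (hn : 1 < n)
    (a : R) : (X ^ n - X - C a : R[X]).natDegree = n := by
  compute_degree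
  · rw [if_neg hn.ne, if_neg (by omega)]; simp
  · omega

theorem monic_X_pow_sub_X_sub_C {R : Type*} [CommRing R] {n : ℕ} (hn : 1 < n)
    (a : R) : (X ^ n - X - C a : R[X]).Monic := by
  monicity!
  rw [if_pos hn.le, if_neg (by omega)]
  simp

theorem IsAlgClosed.exists_pow_sub_self_eq {L : Type*} [Field L] [IsAlgClosed L] {n : ℕ}
    (hn : 1 < n) (c : L) : ∃ α : L, α ^ n - α = c := by
  obtain ⟨α, hα⟩ := IsAlgClosed.exists_root (X ^ n - X - C c) <| by
    rw [degree_eq_natDegree (monic_X_pow_sub_X_sub_C hn c).ne_zero, natDegree_X_pow_sub_X_sub_C hn]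
    exact_mod_cast (by omega : n ≠ 0)
  exact ⟨α, by simpa [sub_eq_zero] using hα⟩

section ArtinSchreier

variable {K : Type*} [Field K] {p : ℕ} [Fact p.Prime] [CharP K p]

theorem exists_pow_char_sub_self_eq_of_monic_dvd {a : K} {h : K[X]} (hm : h.Monic)
    (hdvd : h ∣ X ^ p - X - C a) (hpos : 0 < h.natDegree) (hlt : h.natDegree < p) :
    ∃ x : K, x ^ p - x = a := by
  let L := AlgebraicClosure K
  let φ := algebraMap K L
  let S := φ.fieldRange
  have : CharP L p := charP_of_injective_algebraMap φ.injective p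
  obtain ⟨α, hα⟩ := IsAlgClosed.exists_pow_sub_self_eq (Fact.out : p.Prime).one_lt (φ a)
  let R := (h.map φ).roots
  have hR_card : R.card = h.natDegree := by
    rw [← natDegree_map φ]
    exact splits_iff_card_roots.mp (IsAlgClosed.splits _)
  have hR_sum : R.sum ∈ S := by
    have := (IsAlgClosed.splits (h.map φ)).nextCoeff_eq_neg_sum_roots_of_monic (hm.map φ)
    rw [nextCoeff_map φ.injective] at this
    exact neg_eq_iff_eq_neg.mp this.symm ▸ neg_mem ⟨h.nextCoeff, rfl⟩
  have hR_sub : (R.map (· - α)).sum ∈ S := by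
    refine multiset_sum_mem _ fun _ ht => ?_
    obtain ⟨r, hr, rfl⟩ := Multiset.mem_map.mp ht
    have hr' : r ^ p - r = φ a := by
      have := eval_eq_zero_of_dvd_of_eval_eq_zero (Polynomial.map_dvd φ hdvd) (mem_roots'.mp hr).2
      simpa [sub_sub, sub_eq_zero, sub_eq_iff_eq_add'] using this
    have : r - α ∈ (⊥ : Subfield L) := by
      rw [Subfield.mem_bot_iff_pow_eq_self, sub_pow_char]
      linear_combination hr' - hα
    exact bot_le (a := S) this
  have hdα : (h.natDegree : L) * α ∈ S := by
    have : (h.natDegree : L) * α = R.sum - (R.map (· - α)).sum := by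
      rw [Multiset.sum_map_sub, Multiset.map_id', Multiset.map_const', Multiset.sum_replicate,
        hR_card, nsmul_eq_mul]
      ring
    exact this ▸ sub_mem hR_sum hR_sub
  have hd : (h.natDegree : L) ≠ 0 := by
    rw [Ne, CharP.cast_eq_zero_iff L p]
    exact fun hp_dvd => (Nat.le_of_dvd hpos hp_dvd).not_gt hlt
  obtain ⟨x, hx⟩ : α ∈ S := by
    simpa [hd] using mul_mem (inv_mem (natCast_mem S h.natDegree)) hdα
  exact ⟨x, φ.injective (by simpa [hx] using hα)⟩

theorem irreducible_X_pow_char_sub_X_sub_C_iff (a : K) :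
    Irreducible (X ^ p - X - C a) ↔ ∀ x : K, x ^ p - x ≠ a := by
  have hp := (Fact.out : p.Prime).one_lt
  have hdeg := natDegree_X_pow_sub_X_sub_C hp a
  constructor
  · intro hirr x hx
    have := degree_eq_one_of_irreducible_of_root hirr (x := x) (by simp [hx])
    rw [degree_eq_natDegree hirr.ne_zero, hdeg] at this
    exact hp.ne' (by exact_mod_cast this)
  · intro hroot
    have hm := monic_X_pow_sub_X_sub_C hp a
    rw [hm.irreducible_iff_lt_natDegree_lt (fun h => by simp [h] at hdeg; omega)]
    intro h hmh hdh hdvd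
    rw [hdeg, Finset.mem_Ioc] at hdh
    obtain ⟨x, hx⟩ := exists_pow_char_sub_self_eq_of_monic_dvd hmh hdvd hdh.1
      (hdh.2.trans_lt (Nat.div_lt_self (by omega) one_lt_two))
    exact hroot x hx

end ArtinSchreier

theorem FiniteField.exists_pow_char_sub_self_eq_one_iff {F : Type*} [Field F] [Fintype F]
    {p s : ℕ} [Fact p.Prime] [CharP F p] (hcard : Fintype.card F = p ^ s) :
    (∃ x : F, x ^ p - x = 1) ↔ p ∣ s := by
  constructor
  · rintro ⟨x, hx⟩
    have := pow_char_pow_eq_add_natCast (p := p) (x := x) (by rw [← hx]; ring) s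
    rwa [← hcard, FiniteField.pow_card, left_eq_add, CharP.cast_eq_zero_iff F p] at this
  · intro hps
    let L := AlgebraicClosure F
    have : CharP L p := charP_of_injective_algebraMap (algebraMap F L).injective p
    obtain ⟨α, hα⟩ := IsAlgClosed.exists_pow_sub_self_eq (Fact.out : p.Prime).one_lt (1 : L)
    have hfix : α ^ Fintype.card F = α := by
      rw [hcard, pow_char_pow_eq_add_natCast (by rw [← hα]; ring),
        (CharP.cast_eq_zero_iff L p s).mpr hps, add_zero]
    obtain ⟨x, hx⟩ := FiniteField.mem_range_algebraMap_of_pow_card_eq_self hfix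
    exact ⟨x, (algebraMap F L).injective (by simpa [hx] using hα)⟩

theorem stmt13 {F : Type*} [Field F] [Fintype F] (p s : ℕ) [Fact p.Prime]
    (hcard : Fintype.card F = p ^ s) (b : F) (hb : b ≠ 0) :
    Irreducible (C (b ^ p) * X ^ p - C b * X - 1 : Polynomial F) ↔ ¬ p ∣ s := by
  have : CharP F p := charP_of_card_eq_prime_pow hcard
  have : Invertible b := invertibleOfNonzero hb
  have hsubst : algEquivCMulXAddC b 0 (X ^ p - X - C 1) = C (b ^ p) * X ^ p - C b * X - 1 := by
    simp [algEquivCMulXAddC, mul_pow]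
  rw [← hsubst, MulEquiv.irreducible_iff, irreducible_X_pow_char_sub_X_sub_C_iff, ← not_exists,
    FiniteField.exists_pow_char_sub_self_eq_one_iff hcard]
end

section
/- Let F_q have q = p^s elements with p prime and p | s, and let ℓ ≥ 0 be an integer. If β ∈ F_q is a root of x^p - x - 1, then x^{p^{ℓ+1}} - x^{p^ℓ} - 1 = ∏_{i=0}^{p-1} (x - (β + i))^{p^ℓ} in F_q[x]. -/
/-! The Frobenius map fixes the prime field, so the `p` distinct elements `β + i` are roots of
the monic degree-`p` Artin–Schreier polynomial `X ^ p - X - 1`, which is therefore their product.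
Raising to the power `p ^ ℓ` is additive in characteristic `p`, which turns `(X ^ p - X - 1) ^ p ^ ℓ`
into `X ^ p ^ (ℓ + 1) - X ^ p ^ ℓ - 1`. -/

open Polynomial

namespace Polynomial

section Ring

variable {R : Type*} [Ring R] [Nontrivial R]

theorem monic_X_pow_sub_X_sub_C {n : ℕ} (hn : 1 < n) (a : R) : (X ^ n - X - C a).Monic := by
  rw [sub_sub]
  refine (monic_X_pow n).sub_of_left ?_
  rw [degree_X_pow, degree_X_add_C]
  exact_mod_cast hn

theorem natDegree_X_pow_sub_X_sub_C {n : ℕ} (hn : 1 < n) (a : R) :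
    (X ^ n - X - C a).natDegree = n := by
  rw [natDegree_sub_C, natDegree_sub_eq_left_of_natDegree_lt] <;> simp [hn]

end Ring

variable {R : Type*} [CommRing R] [IsDomain R]

theorem Monic.eq_prod_X_sub_C_of_injOn_isRoot {P : R[X]} (hP : P.Monic) {ι : Type*}
    {s : Finset ι} {f : ι → R} (hf : Set.InjOn f s) (hroot : ∀ i ∈ s, P.IsRoot (f i))
    (hdeg : P.natDegree = s.card) : P = ∏ i ∈ s, (X - C (f i)) := by
  have hnodup : (s.val.map f).Nodup := s.nodup.map_on fun i hi j hj => hf hi hj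
  have hle : s.val.map f ≤ P.roots := by
    refine (Multiset.le_iff_subset hnodup).mpr fun x hx => ?_
    obtain ⟨i, hi, rfl⟩ := Multiset.mem_map.mp hx
    exact (mem_roots hP.ne_zero).mpr (hroot i hi)
  have hdvd : ∏ i ∈ s, (X - C (f i)) ∣ P := by
    have := (Multiset.prod_X_sub_C_dvd_iff_le_roots hP.ne_zero _).mpr hle
    rwa [Multiset.map_map] at this
  refine eq_of_monic_of_dvd_of_natDegree_le (monic_prod_X_sub_C f s) hP hdvd ?_
  rw [hdeg, natDegree_prod_of_monic _ _ fun i _ => monic_X_sub_C (f i)]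
  simp

theorem X_pow_char_sub_X_sub_C_eq_prod (p : ℕ) [Fact p.Prime] [CharP R p] {a β : R}
    (hβ : β ^ p - β = a) : X ^ p - X - C a = ∏ i ∈ Finset.range p, (X - C (β + i)) := by
  have hp : 1 < p := (Fact.out : p.Prime).one_lt
  refine (monic_X_pow_sub_X_sub_C hp a).eq_prod_X_sub_C_of_injOn_isRoot ?_ ?_ ?_
  · intro i hi j hj hij
    exact CharP.natCast_injOn_Iio R p (Finset.mem_range.mp hi) (Finset.mem_range.mp hj)
      (add_left_cancel hij)
  · intro i _
    have hi : (i : R) ^ p = i := by rw [← frobenius_def, map_natCast]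
    simp [add_pow_char, hi, ← hβ]
  · rw [natDegree_X_pow_sub_X_sub_C hp, Finset.card_range]

end Polynomial

theorem stmt16_general {F : Type*} [Field F] (p : ℕ) [Fact p.Prime] [CharP F p] (ℓ : ℕ)
    (β : F) (hβ : β ^ p - β - 1 = 0) :
    (X ^ (p ^ (ℓ + 1)) - X ^ (p ^ ℓ) - 1 : Polynomial F) =
      ∏ i ∈ Finset.range p, (X - C (β + (i : F))) ^ (p ^ ℓ) := by
  have hsplit := X_pow_char_sub_X_sub_C_eq_prod p (sub_eq_zero.mp hβ)
  calc (X ^ (p ^ (ℓ + 1)) - X ^ (p ^ ℓ) - 1 : F[X])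
      = (X ^ p - X - C 1) ^ (p ^ ℓ) := by
        rw [sub_pow_char_pow, sub_pow_char_pow, C_1, one_pow, ← pow_mul, ← pow_succ']
    _ = ∏ i ∈ Finset.range p, (X - C (β + (i : F))) ^ (p ^ ℓ) := by
        rw [hsplit, Finset.prod_pow]

theorem stmt16 {F : Type*} [Field F] [Fintype F] (p s : ℕ) [Fact p.Prime] [CharP F p]
    (hcard : Fintype.card F = p ^ s) (hps : p ∣ s) (ℓ : ℕ)
    (β : F) (hβ : β ^ p - β - 1 = 0) :
    (X ^ (p ^ (ℓ + 1)) - X ^ (p ^ ℓ) - 1 : Polynomial F) =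
      ∏ i ∈ Finset.range p, (X - C (β + (i : F))) ^ (p ^ ℓ) :=
  stmt16_general p ℓ β hβ
end

section
/- Let F_q have q = p^s elements with p prime and let ℓ ≥ 0 be an integer. Then x^{p^{ℓ+s}} - x^{p^ℓ} - 1 = ∏_j (x^p - x - β_j)^{p^ℓ} in F_q[x], where the product runs over the p^{s-1} distinct elements β_j of F_q with Tr_{F_q/F_p}(β_j) = 1, and each factor x^p - x - β_j is irreducible over F_q. -/
/-!
Write `T(x) = ∑_{i<s} x^{p^i}`. In characteristic `p` one has `T(x^p - x) = x^{p^s} - x` and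
`T(x)^p - T(x) = x^{p^s} - x`. Hence on `F` the map `T` takes values among the `p` roots of
`X^p - X`, and each of its fibres consists of roots of `T(X) - c`, a polynomial of degree
`p^{s-1}`. As `|F| = p · p^{s-1}`, every fibre over a root of `X^p - X` has exactly `p^{s-1}`
elements, so `T(X) - 1 = ∏_{T(β) = 1} (X - β)`. Substituting `X^p - X` for `X` gives
`X^{p^s} - X - 1 = ∏_{T(β) = 1} (X^p - X - β)`, and raising to the power `p^ℓ` gives the
factorisation.

If `α` is a root of `X^p - X - β`, then `α^{p^s} = α + T(β)`. The `p^s`-power map sends roots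
of the minimal polynomial of `α` over `F` to roots, so when `T(β) ≠ 0` this polynomial has the
`p` distinct roots `α + n T(β)` and must be `X^p - X - β`.
-/

open Polynomial

/-- When `Fintype.card R = p ^ s` this is the absolute trace `Tr_{R/𝔽_p}`. -/
def traceSum {R : Type*} [Semiring R] (p s : ℕ) (x : R) : R :=
  ∑ i ∈ Finset.range s, x ^ p ^ i

theorem map_traceSum {R S : Type*} [Semiring R] [Semiring S] (p s : ℕ) (f : R →+* S) (x : R) :
    f (traceSum p s x) = traceSum p s (f x) := by
  simp only [traceSum, map_sum, map_pow]

@[simp]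
theorem eval_traceSum_X {R : Type*} [CommSemiring R] (p s : ℕ) (x : R) :
    (traceSum p s (X : R[X])).eval x = traceSum p s x := by
  simp [traceSum, eval_finsetSum]

section ExpChar

variable {R : Type*} [CommRing R] (p s : ℕ) [ExpChar R p]

theorem traceSum_pow_sub_self (x : R) : traceSum p s (x ^ p - x) = x ^ p ^ s - x := by
  simp_rw [traceSum, sub_pow_expChar_pow, ← pow_mul, ← pow_succ']
  simpa using Finset.sum_range_sub (fun i => x ^ p ^ i) s

theorem traceSum_pow_char_sub_self (x : R) :
    traceSum p s x ^ p - traceSum p s x = x ^ p ^ s - x := by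
  rw [← traceSum_pow_sub_self]
  simp only [traceSum]
  rw [sum_pow_char, ← Finset.sum_sub_distrib]
  refine Finset.sum_congr rfl fun i _ => ?_
  rw [sub_pow_expChar_pow, ← pow_mul, ← pow_mul, mul_comm]

end ExpChar

section TraceSumPolynomial

variable {R : Type*} [CommRing R] {p : ℕ}

theorem traceSum_succ_X_sub_C (n : ℕ) (c : R) :
    traceSum p (n + 1) (X : R[X]) - C c = X ^ p ^ n + (traceSum p n X - C c) := by
  rw [traceSum, Finset.sum_range_succ, ← traceSum]
  ring

variable [Nontrivial R]

theorem degree_traceSum_X_lt (hp : 1 < p) (s : ℕ) :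
    (traceSum p s (X : R[X])).degree < (p ^ s : ℕ) := by
  refine (degree_sum_le _ _).trans_lt
    ((Finset.sup_lt_iff (WithBot.bot_lt_coe _)).2 fun i hi => ?_)
  rw [degree_X_pow]
  exact_mod_cast Nat.pow_lt_pow_right hp (Finset.mem_range.1 hi)

theorem monic_traceSum_X_sub_C (hp : 1 < p) {s : ℕ} (hs : s ≠ 0) (c : R) :
    (traceSum p s (X : R[X]) - C c).Monic ∧
      (traceSum p s (X : R[X]) - C c).natDegree = p ^ (s - 1) := by
  obtain ⟨n, rfl⟩ := Nat.exists_eq_succ_of_ne_zero hs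
  have hlt : (traceSum p n (X : R[X]) - C c).degree < (p ^ n : ℕ) :=
    (degree_sub_le _ _).trans_lt (max_lt (degree_traceSum_X_lt hp n)
      (degree_C_le.trans_lt (by exact_mod_cast pow_pos (by omega) n)))
  rw [traceSum_succ_X_sub_C, Nat.succ_sub_one]
  refine ⟨monic_X_pow_add hlt, ?_⟩
  rw [natDegree_add_eq_left_of_degree_lt (by rwa [degree_X_pow]), natDegree_X_pow]

end TraceSumPolynomial

theorem Polynomial.Monic.eq_prod_X_sub_C_of_card_eq {R : Type*} [CommRing R] [IsDomain R]
    {f : R[X]} (hf : f.Monic) {Z : Finset R} (hZ : ∀ a ∈ Z, f.IsRoot a)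
    (hcard : Z.card = f.natDegree) : f = ∏ a ∈ Z, (X - C a) := by
  have hdvd : ∏ a ∈ Z, (X - C a) ∣ f :=
    (Multiset.prod_X_sub_C_dvd_iff_le_roots hf.ne_zero Z.val).2 <|
      (Multiset.le_iff_subset Z.nodup).2 fun a ha => (mem_roots hf.ne_zero).2 (hZ a ha)
  refine eq_of_monic_of_dvd_of_natDegree_le
    (monic_prod_of_monic _ _ fun a _ => monic_X_sub_C a) hf hdvd ?_
  rw [natDegree_finsetProd_X_sub_C_eq_card, hcard]

open Finset in
theorem card_fiber_eq_of_mul_le_card {α β : Type*} [Fintype α] [DecidableEq β] {f : α → β}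
    {t : Finset β} {m n : ℕ} (hf : ∀ a, f a ∈ t) (ht : #t ≤ m)
    (hfib : ∀ b ∈ t, #{a | f a = b} ≤ n) (hcard : m * n ≤ Fintype.card α) :
    ∀ b ∈ t, #{a | f a = b} = n := by
  have hsum : ∑ b ∈ t, #{a | f a = b} = ∑ b ∈ t, n := by
    refine le_antisymm (sum_le_sum hfib) ?_
    calc ∑ b ∈ t, n = #t * n := by rw [sum_const, smul_eq_mul]
      _ ≤ m * n := Nat.mul_le_mul_right n ht
      _ ≤ Fintype.card α := hcard
      _ = ∑ b ∈ t, #{a | f a = b} := by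
        rw [← card_univ]
        exact card_eq_sum_card_fiberwise fun a _ => hf a
  exact (sum_eq_sum_iff_of_le hfib).1 hsum

theorem ne_zero_of_card_eq_pow {α : Type*} [Fintype α] [Nontrivial α] {p s : ℕ}
    (hcard : Fintype.card α = p ^ s) : s ≠ 0 := by
  rintro rfl
  exact (Fintype.one_lt_card (α := α)).ne' (hcard.trans (pow_zero p))

section ArtinSchreier

variable {K : Type*} [Field K] {p : ℕ}

theorem natDegree_X_pow_sub_X_sub_C_s17 (hp : 1 < p) (β : K) :
    (X ^ p - X - C β : K[X]).natDegree = p := by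
  rw [natDegree_sub_C, FiniteField.X_pow_card_sub_X_natDegree_eq K hp]

theorem monic_X_pow_sub_X_sub_C_s17 (hp : 1 < p) (β : K) : (X ^ p - X - C β : K[X]).Monic := by
  rw [sub_sub]
  exact monic_X_pow_sub (by rw [degree_X_add_C]; exact_mod_cast hp)

end ArtinSchreier

section FiniteField

variable {F : Type*} [Field F] [Fintype F] {p s : ℕ}

open Finset in
theorem card_traceSum_fiber_le [DecidableEq F] (hp : 1 < p) (hs : s ≠ 0) (c : F) :
    #{β | traceSum p s β = c} ≤ p ^ (s - 1) := by
  obtain ⟨hmonic, hdeg⟩ := monic_traceSum_X_sub_C (R := F) hp hs c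
  refine hdeg ▸ card_le_degree_of_subset_roots fun β hβ => (mem_roots hmonic.ne_zero).2 ?_
  simpa [sub_eq_zero] using hβ

variable [Fact p.Prime] [CharP F p]

theorem traceSum_pow_char_eq_self (hcard : Fintype.card F = p ^ s) (x : F) :
    traceSum p s x ^ p = traceSum p s x := by
  have := traceSum_pow_char_sub_self p s x
  rwa [← hcard, FiniteField.pow_card, sub_self, sub_eq_zero] at this

theorem irreducible_X_pow_sub_X_sub_C (hcard : Fintype.card F = p ^ s) {β : F}
    (hβ : traceSum p s β ≠ 0) : Irreducible (X ^ p - X - C β : F[X]) := by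
  have hp := (Fact.out : p.Prime).one_lt
  set f : F[X] := X ^ p - X - C β
  obtain ⟨α, hα⟩ := IsAlgClosed.exists_aeval_eq_zero (AlgebraicClosure F) f
    (by rw [degree_eq_natDegree (monic_X_pow_sub_X_sub_C_s17 hp β).ne_zero,
      natDegree_X_pow_sub_X_sub_C_s17 hp]; exact_mod_cast (by omega : p ≠ 0))
  have hint : IsIntegral F α := ⟨f, monic_X_pow_sub_X_sub_C_s17 hp β, hα⟩
  set g := minpoly F α
  have hg_dvd : g ∣ f := minpoly.dvd F α hα
  set t := algebraMap F (AlgebraicClosure F) (traceSum p s β)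
  have hshift : ∀ x, aeval x g = 0 → aeval (x + t) g = 0 := by
    intro x hx
    have hxf : x ^ p - x = algebraMap F _ β := by
      simpa [f, sub_eq_zero] using aeval_eq_zero_of_dvd_aeval_eq_zero hg_dvd hx
    have hfrob : x ^ p ^ s = x + t := by
      have := traceSum_pow_sub_self p s x
      rw [hxf, ← map_traceSum] at this
      linear_combination -this
    rw [← hfrob, ← expand_aeval, ← hcard, FiniteField.expand_card, map_pow, hx,
      zero_pow Fintype.card_ne_zero]
  have hroots : ∀ n : ℕ, aeval (α + n * t) g = 0 := by
    intro n
    induction n with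
    | zero => simp [g]
    | succ n ih => simpa [add_mul, ← add_assoc] using hshift _ ih
  have ht : t ≠ 0 := by simpa [t] using hβ
  have hdeg : p ≤ g.natDegree := by
    classical
    have hinj : Set.InjOn (fun n : ℕ => α + n * t) (Finset.range p) := fun m hm n hn hmn =>
      CharP.natCast_injOn_Iio _ p (by simpa using hm) (by simpa using hn)
        (mul_right_cancel₀ ht (add_left_cancel hmn))
    have hsub : ((Finset.range p).image fun n : ℕ => α + n * t).val ⊆
        (g.map (algebraMap F _)).roots := by
      intro x hx
      obtain ⟨n, -, rfl⟩ := Finset.mem_image.1 (Finset.mem_def.2 hx)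
      rw [mem_roots ((minpoly.monic hint).map _).ne_zero, IsRoot, eval_map_algebraMap]
      exact hroots n
    simpa [Finset.card_image_of_injOn hinj] using card_le_degree_of_subset_roots hsub
  have hfg : f = g := eq_of_monic_of_dvd_of_natDegree_le (minpoly.monic hint)
    (monic_X_pow_sub_X_sub_C_s17 hp β) hg_dvd (by rwa [natDegree_X_pow_sub_X_sub_C_s17 hp])
  exact hfg ▸ minpoly.irreducible hint

variable [DecidableEq F]

open Finset in
theorem card_traceSum_fiber (hcard : Fintype.card F = p ^ s) {c : F} (hc : c ^ p = c) :
    #{β | traceSum p s β = c} = p ^ (s - 1) := by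
  have hp := (Fact.out : p.Prime).one_lt
  have hs := ne_zero_of_card_eq_pow hcard
  have hroot : ∀ x : F, x ∈ (X ^ p - X : F[X]).roots.toFinset ↔ x ^ p = x := fun x => by
    simp [mem_roots (FiniteField.X_pow_card_sub_X_ne_zero F hp), sub_eq_zero]
  refine card_fiber_eq_of_mul_le_card (m := p)
    (fun x => (hroot _).2 (traceSum_pow_char_eq_self hcard x))
    ?_ (fun c _ => card_traceSum_fiber_le hp hs c) ?_ c ((hroot c).2 hc)
  · exact (Multiset.toFinset_card_le _).trans
      ((card_roots' _).trans (FiniteField.X_pow_card_sub_X_natDegree_eq F hp).le)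
  · rw [hcard, ← pow_succ', Nat.sub_one_add_one hs]

theorem traceSum_X_sub_C_eq_prod (hcard : Fintype.card F = p ^ s) {c : F} (hc : c ^ p = c) :
    traceSum p s (X : F[X]) - C c =
      ∏ β ∈ Finset.univ.filter (traceSum p s · = c), (X - C β) := by
  obtain ⟨hmonic, hdeg⟩ :=
    monic_traceSum_X_sub_C (R := F) (Fact.out : p.Prime).one_lt (ne_zero_of_card_eq_pow hcard) c
  refine hmonic.eq_prod_X_sub_C_of_card_eq (fun β hβ => ?_)
    (by rw [card_traceSum_fiber hcard hc, hdeg])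
  simpa [sub_eq_zero] using (Finset.mem_filter.1 hβ).2

theorem X_pow_sub_X_sub_C_eq_prod (hcard : Fintype.card F = p ^ s) {c : F} (hc : c ^ p = c) :
    X ^ p ^ s - X - C c =
      ∏ β ∈ Finset.univ.filter (traceSum p s · = c), (X ^ p - X - C β : F[X]) := by
  have := congr_arg (compRingHom (X ^ p - X : F[X])) (traceSum_X_sub_C_eq_prod hcard hc)
  rw [map_sub, map_traceSum, map_prod, coe_compRingHom_apply, X_comp,
    traceSum_pow_sub_self] at this
  simpa using this

end FiniteField

/-- `Tr_{F_q/F_p}(β) = ∑_{i<s} β^(p^i)`. -/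
theorem stmt17 {F : Type*} [Field F] [Fintype F] [DecidableEq F]
    (p s : ℕ) [Fact p.Prime] [CharP F p] (hcard : Fintype.card F = p ^ s) (ℓ : ℕ) :
    (Finset.univ.filter
        (fun β : F => (∑ i ∈ Finset.range s, β ^ (p ^ i)) = 1)).card = p ^ (s - 1) ∧
    (X ^ (p ^ (ℓ + s)) - X ^ (p ^ ℓ) - 1 : Polynomial F) =
      ∏ β ∈ Finset.univ.filter
          (fun β : F => (∑ i ∈ Finset.range s, β ^ (p ^ i)) = 1),
        (X ^ p - X - C β) ^ (p ^ ℓ) ∧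
    ∀ β ∈ Finset.univ.filter
        (fun β : F => (∑ i ∈ Finset.range s, β ^ (p ^ i)) = 1),
      Irreducible (X ^ p - X - C β : Polynomial F) := by
  have h1 : (1 : F) ^ p = 1 := one_pow p
  refine ⟨card_traceSum_fiber hcard h1, ?_,
    fun β hβ => irreducible_X_pow_sub_X_sub_C hcard ?_⟩
  · calc (X ^ (p ^ (ℓ + s)) - X ^ (p ^ ℓ) - 1 : F[X])
        = (X ^ p ^ s - X - C 1) ^ p ^ ℓ := by
          rw [sub_pow_char_pow, sub_pow_char_pow, ← pow_mul, ← pow_add, add_comm, C_1, one_pow]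
      _ = _ := by rw [X_pow_sub_X_sub_C_eq_prod hcard h1, Finset.prod_pow]; rfl
  · have hβ1 : traceSum p s β = 1 := (Finset.mem_filter.1 hβ).2
    exact hβ1 ▸ one_ne_zero
end

section
/- Let F_q have characteristic p, a ∈ F_{p^r} where F_{p^r} is a subfield of F_q with q = p^s. Then x^q - x - a = ∏_{j=1}^{p^{s-r}} (x^{p^r} - x - β_j) in F_q[x], where β_1, …, β_{p^{s-r}} are the distinct elements of F_q with Tr_{F_q/F_{p^r}}(β_j) = a. -/
/-!
Write `q = |K|`, `n = [F : K]` and `T = ∑_{i<n} X^{q^i}`, so that `Tr(x) = T(x)`. Since `x ↦ x^q` is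
additive, `T(X^q - X)` telescopes to `X^{q^n} - X`, hence `X^{|F|} - X - a = (T - a)(X^q - X)`.
The trace is surjective, so every fibre has `|F| / |K| = q^{n-1}` elements; as `T - a` is monic of
degree `q^{n-1}` and vanishes on the fibre over `a`, it equals `∏_{Tr β = a} (X - β)`.
-/

open Polynomial Finset

theorem Polynomial.Monic.eq_prod_X_sub_C_of_isRoot {R : Type*} [CommRing R] [IsDomain R]
    {g : R[X]} (hg : g.Monic) {S : Finset R} (hroot : ∀ x ∈ S, g.IsRoot x)
    (hcard : g.natDegree ≤ #S) : g = ∏ x ∈ S, (X - C x) := by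
  have hS : S.val = g.roots := by
    refine Multiset.eq_of_le_of_card_le ((Multiset.le_iff_subset S.nodup).2 fun x hx => ?_)
      ((card_roots' g).trans hcard)
    exact (mem_roots hg.ne_zero).2 (hroot x hx)
  rw [prod_eq_multiset_prod, hS]
  exact (prod_multiset_X_sub_C_of_monic_of_roots_card_eq hg
    (le_antisymm (card_roots' g) (hS ▸ hcard))).symm

section

variable (K F : Type*) [Field K] [Field F] [Algebra K F] [Fintype K] [Fintype F]

noncomputable def tracePolynomial : F[X] :=
  ∑ i ∈ range (Module.finrank K F), X ^ Fintype.card K ^ i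

variable {K F}

theorem eval_tracePolynomial (x : F) :
    (tracePolynomial K F).eval x = algebraMap K F (Algebra.trace K F x) := by
  simp [tracePolynomial, eval_finsetSum, FiniteField.algebraMap_trace_eq_sum_pow,
    Nat.card_eq_fintype_card]

theorem tracePolynomial_comp :
    (tracePolynomial K F).comp (X ^ Fintype.card K - X) = X ^ Fintype.card F - X := by
  have hfrob (i : ℕ) : ((X : F[X]) ^ Fintype.card K - X) ^ Fintype.card K ^ i =
      X ^ Fintype.card K ^ (i + 1) - X ^ Fintype.card K ^ i := by
    simpa [FiniteField.coe_frobeniusAlgHom, pow_iterate, ← pow_mul, ← pow_succ'] using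
      map_sub (FiniteField.frobeniusAlgHom K F[X] ^ i) (X ^ Fintype.card K) X
  simp only [tracePolynomial, Polynomial.sum_comp, X_pow_comp, hfrob]
  rw [sum_range_sub (fun i => (X : F[X]) ^ Fintype.card K ^ i),
    ← Module.card_eq_pow_finrank (K := K) (V := F), pow_zero, pow_one]

theorem tracePolynomial_sub_C_monic_natDegree (c : F) :
    (tracePolynomial K F - C c).Monic ∧
      (tracePolynomial K F - C c).natDegree = Fintype.card K ^ (Module.finrank K F - 1) := by
  obtain ⟨m, hm⟩ := Nat.exists_eq_succ_of_ne_zero (Module.finrank_pos (R := K) (M := F)).ne'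
  have hq : 1 < Fintype.card K := Fintype.one_lt_card
  have hlower : (∑ i ∈ range m, (X : F[X]) ^ Fintype.card K ^ i - C c).degree <
      (Fintype.card K ^ m : ℕ) := by
    refine (degree_sub_le _ _).trans_lt (max_lt ((degree_sum_le _ _).trans_lt ?_) ?_)
    · refine (Finset.sup_lt_iff (WithBot.bot_lt_coe _)).2 fun i hi => ?_
      rw [degree_X_pow]
      exact_mod_cast Nat.pow_lt_pow_right hq (mem_range.1 hi)
    · exact degree_C_le.trans_lt (by exact_mod_cast pow_pos (by omega) m)
  have hsplit : tracePolynomial K F - C c =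
      X ^ Fintype.card K ^ m + (∑ i ∈ range m, X ^ Fintype.card K ^ i - C c) := by
    rw [tracePolynomial, hm, sum_range_succ]
    ring
  rw [hsplit, hm, Nat.succ_sub_one]
  refine ⟨monic_X_pow_add hlower, ?_⟩
  rw [natDegree_add_eq_left_of_degree_lt (by rwa [degree_X_pow]), natDegree_X_pow]

theorem card_filter_trace_mul_card [DecidableEq K] (a : K) :
    #{β : F | Algebra.trace K F β = a} * Fintype.card K = Fintype.card F := by
  have hfiber (b : K) : #{β : F | Algebra.trace K F β = b} = #{β : F | Algebra.trace K F β = a} :=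
    AddMonoidHom.card_fiber_eq_of_mem_range (Algebra.trace K F).toAddMonoidHom
      (Algebra.trace_surjective K F b) (Algebra.trace_surjective K F a)
  calc #{β : F | Algebra.trace K F β = a} * Fintype.card K
      = ∑ b : K, #{β : F | Algebra.trace K F β = b} := by simp [hfiber, mul_comm]
    _ = #(univ : Finset F) := (card_eq_sum_card_fiberwise fun β _ => mem_univ _).symm
    _ = Fintype.card F := card_univ

theorem card_filter_trace_eq_pow [DecidableEq K] (a : K) :
    #{β : F | Algebra.trace K F β = a} = Fintype.card K ^ (Module.finrank K F - 1) := by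
  refine Nat.eq_of_mul_eq_mul_right (Fintype.card_pos (α := K)) ?_
  rw [card_filter_trace_mul_card, ← pow_succ,
    Nat.sub_one_add_one (Module.finrank_pos (R := K) (M := F)).ne',
    Module.card_eq_pow_finrank (K := K) (V := F)]

theorem tracePolynomial_sub_C_eq_prod [DecidableEq K] (a : K) :
    tracePolynomial K F - C (algebraMap K F a) =
      ∏ β ∈ {β : F | Algebra.trace K F β = a}, (X - C β) := by
  obtain ⟨hmonic, hdeg⟩ := tracePolynomial_sub_C_monic_natDegree (K := K) (algebraMap K F a)
  refine hmonic.eq_prod_X_sub_C_of_isRoot (fun β hβ => ?_)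
    (hdeg.trans (card_filter_trace_eq_pow a).symm).le
  simp [eval_tracePolynomial, (mem_filter.1 hβ).2]

theorem X_pow_card_sub_X_sub_C_eq_prod [DecidableEq K] (a : K) :
    (X ^ Fintype.card F - X - C (algebraMap K F a) : F[X]) =
      ∏ β ∈ {β : F | Algebra.trace K F β = a}, (X ^ Fintype.card K - X - C β) := by
  rw [← tracePolynomial_comp (K := K), ← C_comp (p := X ^ Fintype.card K - X), ← sub_comp,
    tracePolynomial_sub_C_eq_prod, Polynomial.prod_comp]
  simp only [sub_comp, X_comp, C_comp]

end

theorem stmt18_general {K F : Type*} [Field K] [Field F] [Algebra K F]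
    [Fintype K] [Fintype F] [DecidableEq K]
    (p r s : ℕ) [Fact p.Prime]
    (hK : Fintype.card K = p ^ r) (hF : Fintype.card F = p ^ s) (a : K) :
    (Finset.univ.filter (fun β : F => Algebra.trace K F β = a)).card = p ^ (s - r) ∧
    (X ^ (Fintype.card F) - X - C (algebraMap K F a) : Polynomial F) =
      ∏ β ∈ Finset.univ.filter (fun β : F => Algebra.trace K F β = a),
        (X ^ (Fintype.card K) - X - C β) := by
  refine ⟨?_, X_pow_card_sub_X_sub_C_eq_prod a⟩
  have hcard := card_filter_trace_mul_card (F := F) a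
  rw [hK, hF] at hcard
  have hp : 1 < p := (Fact.out : p.Prime).one_lt
  have hrs : r ≤ s := (Nat.pow_dvd_pow_iff_le_right hp).1 (Dvd.intro_left _ hcard)
  rw [← pow_sub_mul_pow p hrs] at hcard
  exact Nat.eq_of_mul_eq_mul_right (pow_pos (by omega) r) hcard

theorem stmt18 {K F : Type*} [Field K] [Field F] [Algebra K F]
    [Fintype K] [Fintype F] [DecidableEq K]
    (p r s : ℕ) [Fact p.Prime] [CharP F p]
    (hK : Fintype.card K = p ^ r) (hF : Fintype.card F = p ^ s) (a : K) :
    (Finset.univ.filter (fun β : F => Algebra.trace K F β = a)).card = p ^ (s - r) ∧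
    (X ^ (Fintype.card F) - X - C (algebraMap K F a) : Polynomial F) =
      ∏ β ∈ Finset.univ.filter (fun β : F => Algebra.trace K F β = a),
        (X ^ (Fintype.card K) - X - C β) :=
  stmt18_general p r s hK hF a
end

section
/- Let n be a positive integer, 0 ≤ i_0 < i_1 < … < i_{m-1} ≤ n-1, and let a_{i_j}, b_{i_j} (j = 0,…,m-1) be nonzero elements of F_q, with ξ a primitive element of F_q. There exists α ∈ F_q^* with a_{i_j}·α^{n - i_j} = b_{i_j} for all j if and only if the tuple (a_{i_0}^{-1}b_{i_0}, …, a_{i_{m-1}}^{-1}b_{i_{m-1}}) lies in the cyclic subgroup of (F_q^*)^m generated by (ξ^{n-i_0}, …, ξ^{n-i_{m-1}}); moreover, the index of this cyclic subgroup in (F_q^*)^m equals (q-1)^m / lcm_{0≤j≤m-1}((q-1)/gcd(n - i_j, q-1)). -/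
lemma pi_orderOf {ι : Type*} [Fintype ι] {G : ι → Type*} [∀ i, Group (G i)]
    [∀ i, Fintype (G i)] (f : ∀ i, G i) :
    orderOf f = Finset.univ.lcm (fun i => orderOf (f i)) := by
  refine Nat.dvd_antisymm ?_ ?_
  · rw [orderOf_dvd_iff_pow_eq_one]
    funext j
    rw [Pi.pow_apply, Pi.one_apply, ← orderOf_dvd_iff_pow_eq_one]
    exact Finset.dvd_lcm (Finset.mem_univ j)
  · refine Finset.lcm_dvd fun j _ => ?_
    rw [orderOf_dvd_iff_pow_eq_one, ← Pi.pow_apply]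
    rw [pow_orderOf_eq_one f, Pi.one_apply]

theorem stmt19 {F : Type*} [Field F] [Fintype F] (n m : ℕ) (hn : 0 < n) (hm : 0 < m)
    (i : Fin m → ℕ) (hmono : StrictMono i) (hle : ∀ j, i j ≤ n - 1)
    (a b : Fin m → Fˣ) (ξ : Fˣ) (hξ : ∀ x : Fˣ, x ∈ Subgroup.zpowers ξ) :
    ((∃ α : Fˣ, ∀ j, a j * α ^ (n - i j) = b j) ↔
      (fun j => (a j)⁻¹ * b j) ∈
        Subgroup.zpowers (fun j => ξ ^ (n - i j) : (j : Fin m) → Fˣ)) ∧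
    (Subgroup.zpowers (fun j => ξ ^ (n - i j) : (j : Fin m) → Fˣ)).index =
      (Fintype.card F - 1) ^ m /
        Finset.lcm Finset.univ
          (fun j => (Fintype.card F - 1) / Nat.gcd (n - i j) (Fintype.card F - 1)) := by
  letI : Fintype Fˣ := Fintype.ofFinite Fˣ
  have hord : orderOf ξ = Fintype.card F - 1 := by
    rw [orderOf_eq_card_of_forall_mem_zpowers hξ, Nat.card_units, Nat.card_eq_fintype_card]
  have zpa : ∀ (f : Fin m → Fˣ) (k : ℤ) (j : Fin m), (f ^ k) j = f j ^ k := fun _ _ _ => rfl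
  have key : ∀ (α : Fˣ) (k : ℤ) (j : Fin m), ξ ^ k = α →
      (ξ ^ (n - i j)) ^ k = α ^ (n - i j) := by
    intro α k j hk
    rw [← hk, ← zpow_natCast, ← zpow_mul, mul_comm, zpow_mul, zpow_natCast]
  constructor
  · constructor
    · rintro ⟨α, hα⟩
      obtain ⟨k, hk⟩ := hξ α
      refine ⟨k, ?_⟩
      funext j
      show ((fun j => ξ ^ (n - i j) : Fin m → Fˣ) ^ k) j = (a j)⁻¹ * b j
      rw [zpa, key α k j hk, eq_inv_mul_iff_mul_eq, hα j]
    · rintro ⟨k, hk⟩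
      refine ⟨ξ ^ k, fun j => ?_⟩
      have this : ((fun j => ξ ^ (n - i j) : Fin m → Fˣ) ^ k) j = (a j)⁻¹ * b j := congrFun hk j
      rw [zpa] at this
      rw [← key (ξ ^ k) k j rfl, this, mul_inv_cancel_left]
  · set H := Subgroup.zpowers (fun j => ξ ^ (n - i j) : (j : Fin m) → Fˣ)
    have hcard : Nat.card H = Finset.lcm Finset.univ
        (fun j => (Fintype.card F - 1) / Nat.gcd (n - i j) (Fintype.card F - 1)) := by
      rw [Nat.card_zpowers, pi_orderOf]
      congr 1
      funext j
      rw [orderOf_pow, hord, Nat.gcd_comm]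
    have hG : Nat.card ((j : Fin m) → Fˣ) = (Fintype.card F - 1) ^ m := by
      rw [Nat.card_pi, Finset.prod_const, Finset.card_univ, Fintype.card_fin]
      congr 1
      rw [Nat.card_units, Nat.card_eq_fintype_card]
    have := H.index_mul_card
    rw [hcard, hG] at this
    have hpos : 0 < Finset.lcm Finset.univ
        (fun j => (Fintype.card F - 1) / Nat.gcd (n - i j) (Fintype.card F - 1)) := by
      rw [← hcard]
      exact Nat.card_pos
    exact (Nat.div_eq_of_eq_mul_left hpos this.symm).symm
end
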